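/- Let N ≥ 2 be an integer, ε > 0, α > 0, H_x, H_y > 0, and suppose a(i,j) ≥ α and b(i,j) ≥ 0 at all interior indices 1 ≤ i,j ≤ N−1. For a mesh function Z on {0,…,N}² define L^N Z(i,j) := −ε[(Z(i+1,j) − 2Z(i,j) + Z(i−1,j))/H_x² + (Z(i,j+1) − 2Z(i,j) + Z(i,j−1))/H_y²] + a(i,j)·(Z(i,j) − Z(i−1,j))/H_x + b(i,j)·Z(i,j) at interior indices. Then max over all indices of |Z(i,j)| is at most (max over boundary indices of |Z|) + (N·H_x/α)·(max over interior indices of |L^N Z|). -/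
import Mathlib


/-- The upwinded finite difference operator
`L^N Z = -ε(δ²_x + δ²_y)Z + a D⁻_x Z + b Z` on a uniform rectangular mesh. -/
noncomputable def LN2 (ε Hx Hy : ℝ) (a b Z : ℕ → ℕ → ℝ) (i j : ℕ) : ℝ :=
  -ε * ((Z (i+1) j - 2 * Z i j + Z (i-1) j) / Hx ^ 2 +
        (Z i (j+1) - 2 * Z i j + Z i (j-1)) / Hy ^ 2)
  + a i j * (Z i j - Z (i-1) j) / Hx + b i j * Z i j

/-- Discrete minimum principle for `LN2`. -/
lemma LN2_min_principle (N : ℕ) (hN : 2 ≤ N) (ε α Hx Hy : ℝ)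
    (hε : 0 < ε) (hα : 0 < α) (hHx : 0 < Hx) (hHy : 0 < Hy)
    (a b : ℕ → ℕ → ℝ)
    (ha : ∀ i j, 1 ≤ i → i ≤ N - 1 → 1 ≤ j → j ≤ N - 1 → α ≤ a i j)
    (hb : ∀ i j, 1 ≤ i → i ≤ N - 1 → 1 ≤ j → j ≤ N - 1 → 0 ≤ b i j)
    (V : ℕ → ℕ → ℝ)
    (hbd : ∀ i j, i ≤ N → j ≤ N → (i = 0 ∨ i = N ∨ j = 0 ∨ j = N) → 0 ≤ V i j)
    (hint : ∀ i j, 1 ≤ i → i ≤ N - 1 → 1 ≤ j → j ≤ N - 1 →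
      0 ≤ LN2 ε Hx Hy a b V i j) :
    ∀ i j, i ≤ N → j ≤ N → 0 ≤ V i j := by
  by_contra h
  push_neg at h
  obtain ⟨i0, j0, hi0, hj0, hneg⟩ := h
  set G := (Finset.range (N+1)) ×ˢ (Finset.range (N+1)) with hG
  have hGne : G.Nonempty := ⟨(0,0), by simp [hG]⟩
  set m := G.inf' hGne (fun p => V p.1 p.2) with hm
  have hmle : ∀ i j, i ≤ N → j ≤ N → m ≤ V i j := by
    intro i j hi hj
    exact Finset.inf'_le (fun p => V p.1 p.2)
      (show (i, j) ∈ G by simp [hG, Nat.lt_succ_iff]; exact ⟨hi, hj⟩)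
  have hmneg : m < 0 := lt_of_le_of_lt (hmle i0 j0 hi0 hj0) hneg
  set S := {i : ℕ | i ≤ N ∧ ∃ j, j ≤ N ∧ V i j = m} with hS
  have hSne : S.Nonempty := by
    obtain ⟨p, hp, hpv⟩ := G.exists_mem_eq_inf' hGne (fun p => V p.1 p.2)
    simp [hG, Nat.lt_succ_iff] at hp
    exact ⟨p.1, hp.1, p.2, hp.2, hpv.symm⟩
  set i1 := sInf S with hi1def
  obtain ⟨hi1N, j1, hj1N, hV1⟩ := Nat.sInf_mem hSne
  -- boundary points have V ≥ 0 > m, so (i1, j1) is interior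
  have hnotbd : ¬ (i1 = 0 ∨ i1 = N ∨ j1 = 0 ∨ j1 = N) := by
    intro hbdy
    have := hbd i1 j1 hi1N hj1N hbdy
    rw [hV1] at this; linarith
  push_neg at hnotbd
  obtain ⟨h1, h2, h3, h4⟩ := hnotbd
  have hi1ge : 1 ≤ i1 := Nat.one_le_iff_ne_zero.mpr h1
  have hi1le : i1 ≤ N - 1 := by omega
  have hj1ge : 1 ≤ j1 := Nat.one_le_iff_ne_zero.mpr h3
  have hj1le : j1 ≤ N - 1 := by omega
  have h0 := hint i1 j1 hi1ge hi1le hj1ge hj1le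
  have haij := ha i1 j1 hi1ge hi1le hj1ge hj1le
  have hbij := hb i1 j1 hi1ge hi1le hj1ge hj1le
  have hA : m ≤ V (i1+1) j1 := hmle _ _ (by omega) hj1N
  have hBv : m ≤ V (i1-1) j1 := hmle _ _ (by omega) hj1N
  have hC : m ≤ V i1 (j1+1) := hmle _ _ hi1N (by omega)
  have hD : m ≤ V i1 (j1-1) := hmle _ _ hi1N (by omega)
  rw [LN2, hV1] at h0
  -- show V (i1-1) j1 = m, contradicting minimality of i1
  have hVeq : V (i1-1) j1 = m := by
    by_contra hne
    have hBv' : m < V (i1-1) j1 := lt_of_le_of_ne hBv (Ne.symm hne)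
    have hX1 : 0 ≤ (V (i1+1) j1 - 2 * m + V (i1-1) j1) / Hx ^ 2 :=
      div_nonneg (by linarith) (by positivity)
    have hX2 : 0 ≤ (V i1 (j1+1) - 2 * m + V i1 (j1-1)) / Hy ^ 2 :=
      div_nonneg (by linarith) (by positivity)
    have hT1 : -ε * ((V (i1+1) j1 - 2 * m + V (i1-1) j1) / Hx ^ 2 +
        (V i1 (j1+1) - 2 * m + V i1 (j1-1)) / Hy ^ 2) ≤ 0 := by nlinarith
    have hT2 : a i1 j1 * (m - V (i1-1) j1) / Hx < 0 :=
      div_neg_of_neg_of_pos (mul_neg_of_pos_of_neg (by linarith) (by linarith)) hHx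
    have hT3 : b i1 j1 * m ≤ 0 := mul_nonpos_of_nonneg_of_nonpos hbij (le_of_lt hmneg)
    linarith
  have : i1 - 1 ∈ S := ⟨by omega, j1, hj1N, hVeq⟩
  have := Nat.sInf_le this
  omega

/-- Discrete stability bound:
`max |Z| ≤ max_{boundary} |Z| + (N·H_x/α) · max_{interior} |L^N Z|`. -/
theorem stmt4 (N : ℕ) (hN : 2 ≤ N) (ε α Hx Hy : ℝ)
    (hε : 0 < ε) (hα : 0 < α) (hHx : 0 < Hx) (hHy : 0 < Hy)
    (a b : ℕ → ℕ → ℝ)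
    (ha : ∀ i j, 1 ≤ i → i ≤ N - 1 → 1 ≤ j → j ≤ N - 1 → α ≤ a i j)
    (hb : ∀ i j, 1 ≤ i → i ≤ N - 1 → 1 ≤ j → j ≤ N - 1 → 0 ≤ b i j)
    (Z : ℕ → ℕ → ℝ) :
    ∀ i j, i ≤ N → j ≤ N →
      |Z i j| ≤
        sSup {x : ℝ | ∃ i' j', i' ≤ N ∧ j' ≤ N ∧
            (i' = 0 ∨ i' = N ∨ j' = 0 ∨ j' = N) ∧ x = |Z i' j'|} +
        (N * Hx / α) *
          sSup {x : ℝ | ∃ i' j', 1 ≤ i' ∧ i' ≤ N - 1 ∧ 1 ≤ j' ∧ j' ≤ N - 1 ∧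
            x = |LN2 ε Hx Hy a b Z i' j'|} := by
  set Bset := {x : ℝ | ∃ i' j', i' ≤ N ∧ j' ≤ N ∧
      (i' = 0 ∨ i' = N ∨ j' = 0 ∨ j' = N) ∧ x = |Z i' j'|} with hBset
  set Mset := {x : ℝ | ∃ i' j', 1 ≤ i' ∧ i' ≤ N - 1 ∧ 1 ≤ j' ∧ j' ≤ N - 1 ∧
      x = |LN2 ε Hx Hy a b Z i' j'|} with hMset
  -- both sets are finite, hence bounded above
  have hBfin : Bset.Finite := by
    apply Set.Finite.subset (Set.Finite.image (fun p : ℕ × ℕ => |Z p.1 p.2|)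
      (Set.Finite.prod (Set.finite_Iic N) (Set.finite_Iic N)))
    rintro x ⟨i', j', hi', hj', _, rfl⟩
    exact ⟨(i', j'), ⟨hi', hj'⟩, rfl⟩
  have hMfin : Mset.Finite := by
    apply Set.Finite.subset (Set.Finite.image
      (fun p : ℕ × ℕ => |LN2 ε Hx Hy a b Z p.1 p.2|)
      (Set.Finite.prod (Set.finite_Iic N) (Set.finite_Iic N)))
    rintro x ⟨i', j', _, hi', _, hj', rfl⟩
    exact ⟨(i', j'), ⟨by simp; omega, by simp; omega⟩, rfl⟩
  have hBbdd : BddAbove Bset := hBfin.bddAbove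
  have hMbdd : BddAbove Mset := hMfin.bddAbove
  set Bc := sSup Bset with hBc
  set M := sSup Mset with hM
  have hBle : ∀ i j, i ≤ N → j ≤ N → (i = 0 ∨ i = N ∨ j = 0 ∨ j = N) →
      |Z i j| ≤ Bc := fun i j hi hj hbdy =>
    le_csSup hBbdd ⟨i, j, hi, hj, hbdy, rfl⟩
  have hMle : ∀ i j, 1 ≤ i → i ≤ N - 1 → 1 ≤ j → j ≤ N - 1 →
      |LN2 ε Hx Hy a b Z i j| ≤ M := fun i j h1 h2 h3 h4 =>
    le_csSup hMbdd ⟨i, j, h1, h2, h3, h4, rfl⟩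
  have hBnn : 0 ≤ Bc := le_trans (abs_nonneg _)
    (hBle 0 0 (by omega) (by omega) (Or.inl rfl))
  have hMnn : 0 ≤ M := le_trans (abs_nonneg _)
    (hMle 1 1 le_rfl (by omega) le_rfl (by omega))
  -- barrier function
  set W : ℕ → ℕ → ℝ := fun i j => Bc + ((i : ℝ) * Hx / α) * M with hW
  have hWbd : ∀ i j, i ≤ N → j ≤ N → 0 ≤ W i j := by
    intro i j _ _
    have : (0:ℝ) ≤ ((i : ℝ) * Hx / α) * M := by positivity
    simp only [hW]; linarith
  -- LN2 of W at interior points is ≥ M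
  have hLNW : ∀ i j, 1 ≤ i → i ≤ N - 1 → 1 ≤ j → j ≤ N - 1 →
      M ≤ LN2 ε Hx Hy a b W i j := by
    intro i j h1 h2 h3 h4
    have hcast : ((i - 1 : ℕ) : ℝ) = (i : ℝ) - 1 := by
      have := Nat.cast_pred (by omega : 0 < i) (R := ℝ); exact this
    have heq : LN2 ε Hx Hy a b W i j =
        a i j * M / α + b i j * (Bc + ((i : ℝ) * Hx / α) * M) := by
      simp only [LN2, hW, Nat.cast_add, Nat.cast_one, hcast]
      field_simp
      ring
    have haij := ha i j h1 h2 h3 h4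
    have hbij := hb i j h1 h2 h3 h4
    have ht1 : M ≤ a i j * M / α := by
      rw [le_div_iff₀ hα]; nlinarith
    have ht2 : 0 ≤ b i j * (Bc + ((i : ℝ) * Hx / α) * M) :=
      mul_nonneg hbij (by positivity)
    rw [heq]; linarith
  -- apply the minimum principle to W ± Z
  have key : ∀ s : ℝ, s = 1 ∨ s = -1 →
      ∀ i j, i ≤ N → j ≤ N → 0 ≤ W i j + s * Z i j := by
    intro s hs
    apply LN2_min_principle N hN ε α Hx Hy hε hα hHx hHy a b ha hb
    · intro i j hi hj hbdy
      have h1 := hBle i j hi hj hbdy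
      have h2 := hWbd i j hi hj
      have habs : |s * Z i j| = |Z i j| := by
        rcases hs with rfl | rfl <;> simp [abs_mul]
      have h3 : -(Bc) ≤ s * Z i j := by
        have h5 := neg_abs_le (s * Z i j)
        rw [habs] at h5; linarith
      simp only [hW] at h2 ⊢
      have h4 : (0:ℝ) ≤ ((i : ℝ) * Hx / α) * M := by positivity
      linarith
    · intro i j h1 h2 h3 h4
      have hlin : LN2 ε Hx Hy a b (fun i' j' => W i' j' + s * Z i' j') i j =
          LN2 ε Hx Hy a b W i j + s * LN2 ε Hx Hy a b Z i j := by
        simp only [LN2]; ring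
      have hW' := hLNW i j h1 h2 h3 h4
      have hZ' := hMle i j h1 h2 h3 h4
      have : -M ≤ s * LN2 ε Hx Hy a b Z i j := by
        have habs : |s * LN2 ε Hx Hy a b Z i j| = |LN2 ε Hx Hy a b Z i j| := by
          rcases hs with rfl | rfl <;> simp [abs_mul]
        have := neg_abs_le (s * LN2 ε Hx Hy a b Z i j)
        rw [habs] at this; linarith
      rw [hlin]; linarith
  intro i j hi hj
  have hp := key 1 (Or.inl rfl) i j hi hj
  have hn := key (-1) (Or.inr rfl) i j hi hj
  have habsle : |Z i j| ≤ W i j := by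
    rw [abs_le]; constructor <;> [linarith; linarith]
  have hfin : W i j ≤ Bc + ((N : ℝ) * Hx / α) * M := by
    simp only [hW]
    have : (i : ℝ) ≤ (N : ℝ) := Nat.cast_le.mpr hi
    have h5 : (i : ℝ) * Hx / α * M ≤ (N : ℝ) * Hx / α * M := by
      gcongr
    linarith
  exact habsle.trans hfin
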